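/- For real numbers A > B > 1, we have B·(ln B)²/(B−1)² > A·(ln A)²/(A−1)². -/

import Mathlib

/-!
Substituting `x = exp (2 t)` gives `x (log x)² / (x - 1)² = (t / sinh t)²`, because
`exp (2 t) - 1 = 2 exp t sinh t`. Since `sinh` is strictly convex on `[0, ∞)` and vanishes at `0`,
its secant slope `sinh t / t` is strictly increasing for `t > 0`, so `(t / sinh t)²` is strictly
decreasing there.
-/

open Real Set

lemma strictConvexOn_sinh : StrictConvexOn ℝ (Ici 0) sinh :=
  strictConvexOn_of_deriv2_pos (convex_Ici 0) continuous_sinh.continuousOn fun x hx => by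
    rw [interior_Ici] at hx
    simpa [Real.deriv_sinh, Real.deriv_cosh] using hx

lemma strictMonoOn_sinh_div_self : StrictMonoOn (fun t => sinh t / t) (Ioi 0) :=
  fun x hx y hy hxy => by
    simpa using strictConvexOn_sinh.secant_strict_mono self_mem_Ici
      (mem_Ici.mpr hx.le) (mem_Ici.mpr hy.le) hx.ne' hy.ne' hxy

lemma strictAntiOn_sq_self_div_sinh : StrictAntiOn (fun t => (t / sinh t) ^ 2) (Ioi 0) :=
  fun x hx y hy hxy => by
    have hx' : 0 < sinh x / x := div_pos (sinh_pos_iff.mpr hx) hx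
    have hslope : sinh x / x < sinh y / y := strictMonoOn_sinh_div_self hx hy hxy
    have hy' : 0 < y / sinh y := div_pos hy (sinh_pos_iff.mpr hy)
    simp only [← inv_div (sinh _)] at hy' ⊢
    gcongr

lemma exp_two_mul_mul_sq_div_sq_eq (t : ℝ) :
    exp (2 * t) * (2 * t) ^ 2 / (exp (2 * t) - 1) ^ 2 = (t / sinh t) ^ 2 := by
  have hsub : exp (2 * t) - 1 = 2 * exp t * sinh t := by
    rw [sinh_eq, two_mul, exp_add, exp_neg]
    field_simp
  rw [hsub, two_mul, exp_add]
  field_simp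
  ring

lemma mul_log_sq_div_sub_one_sq_eq {x : ℝ} (hx : 0 < x) :
    x * log x ^ 2 / (x - 1) ^ 2 = (log x / 2 / sinh (log x / 2)) ^ 2 := by
  simpa [mul_div_cancel₀, exp_log hx] using exp_two_mul_mul_sq_div_sq_eq (log x / 2)

theorem stmt_1 (A B : ℝ) (hB : 1 < B) (hBA : B < A) :
    B * (Real.log B) ^ 2 / (B - 1) ^ 2 > A * (Real.log A) ^ 2 / (A - 1) ^ 2 := by
  have hB0 : 0 < B := zero_lt_one.trans hB
  have hlogB : 0 < log B / 2 := half_pos (log_pos hB)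
  have hlog : log B / 2 < log A / 2 := by gcongr
  rw [gt_iff_lt, mul_log_sq_div_sub_one_sq_eq hB0, mul_log_sq_div_sub_one_sq_eq (hB0.trans hBA)]
  exact strictAntiOn_sq_self_div_sinh hlogB (hlogB.trans hlog) hlog
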